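/- Let (ν_{ij}) be an n×n integer matrix with ν_{ii} = 0 and ν_{ij} + ν_{ji} ≥ 0 for all i,j, and suppose that for every pair (i,j) there exists an integer point b of the polytope C(ν) (i.e., b_1 = 0 and −ν_{lk} ≤ b_k − b_l ≤ ν_{kl} for all k,l) with b_i − b_j = ν_{ij}. Then ν_{ik} + ν_{kj} ≥ ν_{ij} for all i,j,k, and hence S = {A ∈ M_n(k) : A_{ij} ∈ p^{ν_{ij}}} is an O-order. -/

import Mathlib

/-!
An integer point `b` of `C(ν)` on the hyperplane `x_i - x_l = ν_{il}` gives
`ν_{il} = (b_i - b_j) + (b_j - b_l) ≤ ν_{ij} + ν_{jl}`. By this triangle inequality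
`A_{il} B_{lj} ∈ p^{ν_{il} + ν_{lj}} ⊆ p^{ν_{ij}}`, so `S` is closed under multiplication.
As an `O`-module `S` is the product of the cyclic modules `π^{ν_{ij}} O`, hence finitely
generated, and a common denominator of the entries `A_{ij} π^{-ν_{ij}}` puts a nonzero
multiple of any matrix `A` into `S`.
-/

noncomputable section

/-- The fractional ideal `p^ν = π^ν O` inside `k`. -/
def pset (O : Type*) [CommRing O] {k : Type*} [Field k] [Algebra O k] (π : k) (ν : ℤ) :
    Set k := {x : k | ∃ c : O, x = algebraMap O k c * π ^ ν}

/-- An `O`-order in `M_n(k)`: a subalgebra which is finitely generated as an `O`-module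
and is a full lattice (every matrix has a nonzero `O`-multiple in it). -/
def IsOrder (O : Type*) [CommRing O] {k : Type*} [Field k] [Algebra O k] {n : ℕ}
    (S : Subalgebra O (Matrix (Fin n) (Fin n) k)) : Prop :=
  (Subalgebra.toSubmodule S).FG ∧
    ∀ A : Matrix (Fin n) (Fin n) k, ∃ c : O, c ≠ 0 ∧ algebraMap O k c • A ∈ S

/-- A subset of `M_n(k)` is an `O`-order if it is the underlying set of an order. -/
def IsOrderSet (O : Type*) [CommRing O] {k : Type*} [Field k] [Algebra O k] {n : ℕ}
    (s : Set (Matrix (Fin n) (Fin n) k)) : Prop :=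
  ∃ S : Subalgebra O (Matrix (Fin n) (Fin n) k),
    (S : Set (Matrix (Fin n) (Fin n) k)) = s ∧ IsOrder O S

/-- The maximal order `Λ(m₁,…,m_n) = {A : A_{ij} ∈ p^{m_i - m_j}}`. -/
def Lam (O : Type*) [CommRing O] {k : Type*} [Field k] [Algebra O k] {n : ℕ} (π : k)
    (m : Fin n → ℤ) : Set (Matrix (Fin n) (Fin n) k) :=
  {A | ∀ i j, A i j ∈ pset O π (m i - m j)}

/-- A maximal `O`-order. -/
def IsMaximalOrder (O : Type*) [CommRing O] {k : Type*} [Field k] [Algebra O k] {n : ℕ}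
    (S : Subalgebra O (Matrix (Fin n) (Fin n) k)) : Prop :=
  IsOrder O S ∧ ∀ T : Subalgebra O (Matrix (Fin n) (Fin n) k), IsOrder O T → S ≤ T → T = S

/-- `m` is an integer point of the convex polytope `C(ν)` (in the hyperplane `x₁ = 0`). -/
def IntPt {n : ℕ} [NeZero n] (ν : Matrix (Fin n) (Fin n) ℤ) (m : Fin n → ℤ) : Prop :=
  m 0 = 0 ∧ ∀ i j, -ν j i ≤ m i - m j ∧ m i - m j ≤ ν i j

/-- `ν` is reduced: `C(ν)` contains an integer point and every bounding hyperplane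
`x_i - x_j = ν_{ij}` contains an integer point of `C(ν)`. -/
def Reduced {n : ℕ} [NeZero n] (ν : Matrix (Fin n) (Fin n) ℤ) : Prop :=
  (∃ m, IntPt ν m) ∧ ∀ i j, ∃ m, IntPt ν m ∧ m i - m j = ν i j


theorem IntPt.le_add_of_sub_eq {n : ℕ} [NeZero n] {ν : Matrix (Fin n) (Fin n) ℤ}
    {b : Fin n → ℤ} (hb : IntPt ν b) {i l : Fin n} (h : b i - b l = ν i l) (j : Fin n) :
    ν i l ≤ ν i j + ν j l := by
  have hij := (hb.2 i j).2
  have hjl := (hb.2 j l).2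
  omega

section Lattice

variable (O : Type*) [CommRing O] {k : Type*} [Field k] [Algebra O k] (π : k)

theorem mem_pset_iff_mem_span {μ : ℤ} {x : k} :
    x ∈ pset O π μ ↔ x ∈ O ∙ π ^ μ := by
  rw [Submodule.mem_span_singleton]
  exact exists_congr fun c => by rw [Algebra.smul_def, eq_comm]

theorem mul_mem_pset {π : k} (hπ0 : π ≠ 0) {μ₁ μ₂ : ℤ} {x y : k} (hx : x ∈ pset O π μ₁)
    (hy : y ∈ pset O π μ₂) : x * y ∈ pset O π (μ₁ + μ₂) := by
  obtain ⟨c, rfl⟩ := hx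
  obtain ⟨d, rfl⟩ := hy
  exact ⟨c * d, by rw [map_mul, zpow_add₀ hπ0]; ring⟩

theorem pset_antitone {π : k} {ϖ : O} (hπ : π = algebraMap O k ϖ) (hπ0 : π ≠ 0) :
    Antitone (pset O π) := by
  rintro μ₁ μ₂ h x ⟨c, rfl⟩
  refine ⟨c * ϖ ^ (μ₂ - μ₁).toNat, ?_⟩
  rw [map_mul, map_pow, ← hπ, ← zpow_natCast, Int.toNat_of_nonneg (sub_nonneg.2 h), mul_assoc,
    ← zpow_add₀ hπ0, sub_add_cancel]

variable {ι : Type*}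

def matrixLattice (ν : Matrix ι ι ℤ) : Submodule O (Matrix ι ι k) :=
  Submodule.pi Set.univ fun i => Submodule.pi Set.univ fun j => O ∙ π ^ ν i j

variable {O π}

theorem mem_matrixLattice {ν : Matrix ι ι ℤ} {A : Matrix ι ι k} :
    A ∈ matrixLattice O π ν ↔ ∀ i j, A i j ∈ pset O π (ν i j) := by
  simp only [mem_pset_iff_mem_span]
  exact ⟨fun h i j => h i trivial j trivial, fun h i _ j _ => h i j⟩

theorem matrixLattice_fg [Finite ι] (ν : Matrix ι ι ℤ) : (matrixLattice O π ν).FG :=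
  Submodule.fg_pi fun _ => Submodule.fg_pi fun _ => Submodule.fg_span_singleton _

theorem one_mem_matrixLattice [DecidableEq ι] {ν : Matrix ι ι ℤ} (hdiag : ∀ i, ν i i = 0) :
    1 ∈ matrixLattice O π ν := by
  refine mem_matrixLattice.2 fun i j => ?_
  rcases eq_or_ne i j with rfl | hij
  · exact ⟨1, by simp [hdiag]⟩
  · exact ⟨0, by simp [hij]⟩

theorem mul_mem_matrixLattice [Fintype ι] {ϖ : O} (hπ : π = algebraMap O k ϖ) (hπ0 : π ≠ 0)
    {ν : Matrix ι ι ℤ} (htri : ∀ i j l, ν i l ≤ ν i j + ν j l) {A B : Matrix ι ι k}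
    (hA : A ∈ matrixLattice O π ν) (hB : B ∈ matrixLattice O π ν) :
    A * B ∈ matrixLattice O π ν := by
  rw [mem_matrixLattice] at hA hB ⊢
  intro i j
  rw [Matrix.mul_apply, mem_pset_iff_mem_span]
  refine Submodule.sum_mem _ fun l _ => (mem_pset_iff_mem_span O π).1 ?_
  exact pset_antitone O hπ hπ0 (htri i l j) (mul_mem_pset O hπ0 (hA i l) (hB l j))

theorem exists_ne_zero_smul_mem_matrixLattice [Finite ι] [IsFractionRing O k] (hπ0 : π ≠ 0)
    (ν : Matrix ι ι ℤ) (A : Matrix ι ι k) :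
    ∃ c : O, c ≠ 0 ∧ algebraMap O k c • A ∈ matrixLattice O π ν := by
  have := (algebraMap O k).domain_nontrivial
  obtain ⟨b, hb⟩ := IsLocalization.exist_integer_multiples_of_finite (nonZeroDivisors O)
    fun p : ι × ι => A p.1 p.2 * π ^ (-ν p.1 p.2)
  refine ⟨b, nonZeroDivisors.ne_zero b.2, mem_matrixLattice.2 fun i j => ?_⟩
  obtain ⟨c, hc⟩ := hb (i, j)
  refine ⟨c, ?_⟩
  rw [hc, Algebra.smul_def, Matrix.smul_apply, smul_eq_mul, mul_assoc, mul_assoc,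
    ← zpow_add₀ hπ0, neg_add_cancel, zpow_zero, mul_one]

end Lattice

theorem stmt9_general {n : ℕ} [NeZero n] {O : Type*} [CommRing O]
{k : Type*} [Field k] [Algebra O k] [IsFractionRing O k]
    (ϖ : O) (hϖ : Irreducible ϖ) (π : k) (hπ : π = algebraMap O k ϖ)
    (ν : Matrix (Fin n) (Fin n) ℤ) (hdiag : ∀ i, ν i i = 0)
    (hmeet : ∀ i j : Fin n, ∃ b : Fin n → ℤ, IntPt ν b ∧ b i - b j = ν i j) :
    (∀ i j l : Fin n, ν i j + ν j l ≥ ν i l) ∧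
    IsOrderSet O {A : Matrix (Fin n) (Fin n) k | ∀ i j, A i j ∈ pset O π (ν i j)} := by
  have hπ0 : π ≠ 0 := hπ ▸ (map_ne_zero_iff _ (IsFractionRing.injective O k)).2 hϖ.ne_zero
  have htri : ∀ i j l : Fin n, ν i j + ν j l ≥ ν i l := fun i j l =>
    let ⟨_, hb, hil⟩ := hmeet i l
    hb.le_add_of_sub_eq hil j
  let S := (matrixLattice O π ν).toSubalgebra (one_mem_matrixLattice hdiag)
    fun _ _ => mul_mem_matrixLattice hπ hπ0 htri
  refine ⟨htri, S, Set.ext fun _ => mem_matrixLattice, ?_,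
    exists_ne_zero_smul_mem_matrixLattice hπ0 ν⟩
  rw [Submodule.toSubalgebra_toSubmodule]
  exact matrixLattice_fg ν

/-- If every bounding hyperplane `x_i - x_j = ν_{ij}` meets the integer points of
`C(ν)`, then `ν` satisfies the triangle inequality, and hence
`S = (p^{ν_{ij}})` is an `O`-order. -/
theorem stmt9 {n : ℕ} [NeZero n] {O : Type*} [CommRing O] [IsDomain O] [IsDiscreteValuationRing O]
{k : Type*} [Field k] [Algebra O k] [IsFractionRing O k]
    (ϖ : O) (hϖ : Irreducible ϖ) (π : k) (hπ : π = algebraMap O k ϖ)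
    (ν : Matrix (Fin n) (Fin n) ℤ) (hdiag : ∀ i, ν i i = 0)
    (hsym : ∀ i j, 0 ≤ ν i j + ν j i)
    (hmeet : ∀ i j : Fin n, ∃ b : Fin n → ℤ, IntPt ν b ∧ b i - b j = ν i j) :
    (∀ i j l : Fin n, ν i j + ν j l ≥ ν i l) ∧
    IsOrderSet O {A : Matrix (Fin n) (Fin n) k | ∀ i j, A i j ∈ pset O π (ν i j)} :=
  stmt9_general ϖ hϖ π hπ ν hdiag hmeet
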